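/- (Prox of smoothed W regularizer) Let R be the smoothed W-shaped regularizer with parameter ε ∈ (0, 1/2]. For any λ ≥ 1 and any θ with |θ| ≤ 1, θ ≠ 0, the point (εθ + λ sign(θ))/(ε + λ) is a critical point of t ↦ (1/2)(t - θ)² + λR(t), i.e. satisfies (t - θ) + λR'(t) = 0, and lies in the interval with endpoints sign(θ)(1-ε) and sign(θ)(1+ε), on which R(t) = (t - sign(θ))²/(2ε). -/

import Mathlib

/-- The smoothed W-shaped regularizer with smoothing radius `ε`. -/
noncomputable def smoothW (ε : ℝ) (θ : ℝ) : ℝ :=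
  if |θ| < ε then -θ^2/(2*ε) + 1 - ε
  else if |θ| < 1 - ε then -|θ| + 1 - ε/2
  else if |θ| < 1 + ε then (|θ| - 1)^2/(2*ε)
  else |θ| - 1 - ε/2

/-- Sign with `sgn θ = 1` for `θ > 0`, `-1` for `θ < 0` (value at 0 unused here). -/
noncomputable def sgn (θ : ℝ) : ℝ := if 0 < θ then 1 else -1

/-- For `λ ≥ 1`, `0 < |θ| ≤ 1`, the point `t* = (εθ + λ sgn θ)/(ε + λ)` lies in
the quadratic cap around `sign(θ)` (i.e. `|t* - sign θ| ≤ ε`) and is a critical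
point of the prox objective `t ↦ (1/2)(t - θ)² + λ R(t)`. -/
theorem smoothW_prox_critical_point (ε lam θ : ℝ) (hε : 0 < ε) (hε' : ε ≤ 1/2)
    (hlam : 1 ≤ lam) (hθ : |θ| ≤ 1) (hθ0 : θ ≠ 0) :
    |((ε * θ + lam * sgn θ) / (ε + lam)) - sgn θ| ≤ ε ∧
    deriv (fun t => (1/2) * (t - θ)^2 + lam * smoothW ε t)
        ((ε * θ + lam * sgn θ) / (ε + lam)) = 0 := by
  set s : ℝ := sgn θ with hs
  have hθ' := abs_le.mp hθ
  have hsum : (0:ℝ) < ε + lam := by linarith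
  have hs1 : s = 1 ∨ s = -1 := by
    unfold s; unfold sgn; split <;> simp
  have hθs : |θ - s| < 1 := by
    rcases hθ0.lt_or_gt with h | h
    · have : s = -1 := by unfold s; unfold sgn; rw [if_neg (by linarith)]
      rw [this]; rw [abs_lt]; constructor <;> linarith
    · have : s = 1 := by unfold s; unfold sgn; rw [if_pos h]
      rw [abs_lt]; constructor <;> linarith [this]
  set t : ℝ := (ε * θ + lam * s) / (ε + lam) with ht
  have hts : t - s = ε * (θ - s) / (ε + lam) := by
    rw [ht]; field_simp; ring
  have hstrict : |t - s| < ε := by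
    rw [hts, abs_div, abs_mul, abs_of_pos hε, abs_of_pos hsum, div_lt_iff₀ hsum]
    nlinarith [abs_nonneg (θ - s)]
  refine ⟨hstrict.le, ?_⟩
  -- local form of smoothW near t
  have hmem : ∀ u : ℝ, |u - s| < ε → smoothW ε u = (u - s)^2 / (2*ε) := by
    intro u hu
    have hsu : 1 - ε < s * u := by
      have h2 : |s * (u - s)| = |u - s| := by
        rcases hs1 with h | h <;> rw [h] <;> [simp; (rw [show (-1:ℝ) * (u - -1) = -(u+1) by ring, abs_neg]; simp)]
      have h3 : s * u = 1 + s * (u - s) := by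
        rcases hs1 with h | h <;> rw [h] <;> ring
      nlinarith [neg_abs_le (s * (u - s)), h2]
    have hsu' : s * u < 1 + ε := by
      have h2 : |s * (u - s)| = |u - s| := by
        rcases hs1 with h | h <;> rw [h] <;> [simp; (rw [show (-1:ℝ) * (u - -1) = -(u+1) by ring, abs_neg]; simp)]
      have h3 : s * u = 1 + s * (u - s) := by
        rcases hs1 with h | h <;> rw [h] <;> ring
      nlinarith [le_abs_self (s * (u - s)), h2]
    have hpos : 0 < s * u := by linarith
    have habs : |u| = s * u := by
      rcases hs1 with h | h
      · rw [h] at hpos ⊢; simp at hpos ⊢; linarith [abs_of_pos hpos]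
      · rw [h] at hpos ⊢
        have : u < 0 := by nlinarith
        rw [abs_of_neg this]; ring
    have hsq : (s * u - 1)^2 = (u - s)^2 := by
      rcases hs1 with h | h <;> rw [h] <;> ring
    unfold smoothW
    rw [habs]
    rw [if_neg (by push_neg; linarith), if_neg (by push_neg; linarith),
        if_pos (by linarith), hsq]
  have hev : ∀ᶠ u in nhds t, |u - s| < ε := by
    have hopen : IsOpen {u : ℝ | |u - s| < ε} :=
      isOpen_lt (by fun_prop) continuous_const
    exact Filter.eventually_of_mem (hopen.mem_nhds hstrict) fun u hu => hu
  have hfe : (fun u => (1/2) * (u - θ)^2 + lam * smoothW ε u)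
      =ᶠ[nhds t] (fun u => (1/2) * (u - θ)^2 + lam * ((u - s)^2 / (2*ε))) :=
    hev.mono fun u hu => by simp only [hmem u hu]
  rw [hfe.deriv_eq]
  have h1 : HasDerivAt (fun u : ℝ => (1/2) * (u - θ)^2) ((1/2) * (2 * (t - θ)^1 * 1)) t := by
    exact (((hasDerivAt_id t).sub_const θ).pow 2).const_mul _
  have h2 : HasDerivAt (fun u : ℝ => lam * ((u - s)^2 / (2*ε)))
      (lam * ((2 * (t - s)^1 * 1) / (2*ε))) t := by
    exact ((((hasDerivAt_id t).sub_const s).pow 2).div_const _).const_mul _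
  rw [HasDerivAt.deriv (f := fun u => (1/2) * (u - θ)^2 + lam * ((u - s)^2 / (2*ε))) (h1.add h2)]
  have hε0 : (ε : ℝ) ≠ 0 := ne_of_gt hε
  have hsum0 : (ε + lam : ℝ) ≠ 0 := ne_of_gt hsum
  rw [ht]
  field_simp
  ring
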